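/- Let Σ be a counting signature with exactly m counting predicates, let Y be a non-negative integer, and let 𝔄 be a Y-branching structure interpreting Σ. Let Σ' be the signature formed by adding ⌈log₂((mY)² + 1)⌉ new unary predicates to Σ, regarded as a counting signature with the same counting predicates as Σ. Then 𝔄 can be expanded to a chromatic structure 𝔄' interpreting Σ' (i.e., there is a Σ'-structure 𝔄' on the same domain whose reduct to Σ is 𝔄 and which is chromatic over Σ'). -/

import Mathlib

/-- A counting signature: finite sets of unary and binary predicate symbols,
with a distinguished finite set of binary predicates (the counting predicates). -/
structure CSig where
  U : Type
  B : Type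
  [instU : Fintype U]
  [instDU : DecidableEq U]
  [instB : Fintype B]
  [instDB : DecidableEq B]
  counting : Finset B

attribute [instance] CSig.instU CSig.instDU CSig.instB CSig.instDB

/-- A structure interpreting a counting signature over domain `A`. -/
structure Struc (σ : CSig) (A : Type) where
  unary : σ.U → A → Bool
  binary : σ.B → A → A → Bool

/-- A 1-type over `σ`: a truth assignment to all literals in the single variable x. -/
structure OneType (σ : CSig) where
  u : σ.U → Bool
  d : σ.B → Bool
deriving DecidableEq, Fintype

/-- A 2-type over `σ`: a truth assignment to all equality-free literals in x, y. -/
structure TwoType (σ : CSig) where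
  ux : σ.U → Bool
  uy : σ.U → Bool
  dx : σ.B → Bool
  dy : σ.B → Bool
  rxy : σ.B → Bool
  ryx : σ.B → Bool
deriving DecidableEq

variable {σ : CSig} {A : Type}

/-- Explicit equivalence of `TwoType σ` with a product, giving finiteness. -/
def TwoType.equivProd (σ : CSig) :
    TwoType σ ≃ ((σ.U → Bool) × (σ.U → Bool) × (σ.B → Bool) × (σ.B → Bool) ×
      (σ.B → Bool) × (σ.B → Bool)) where
  toFun τ := ⟨τ.ux, τ.uy, τ.dx, τ.dy, τ.rxy, τ.ryx⟩
  invFun p := ⟨p.1, p.2.1, p.2.2.1, p.2.2.2.1, p.2.2.2.2.1, p.2.2.2.2.2⟩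
  left_inv τ := rfl
  right_inv p := rfl

instance : Fintype (TwoType σ) := Fintype.ofEquiv _ (TwoType.equivProd σ).symm

/-- The result of transposing x and y in a 2-type. -/
def TwoType.inv (τ : TwoType σ) : TwoType σ := ⟨τ.uy, τ.ux, τ.dy, τ.dx, τ.ryx, τ.rxy⟩

/-- The 1-type (of x) included in a 2-type. -/
def TwoType.tp1 (τ : TwoType σ) : OneType σ := ⟨τ.ux, τ.dx⟩

/-- tp₂(τ) = tp₁(τ⁻¹). -/
def TwoType.tp2 (τ : TwoType σ) : OneType σ := ⟨τ.uy, τ.dy⟩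

/-- The 1-type of an element. -/
def Struc.tp1 (S : Struc σ A) (a : A) : OneType σ :=
  ⟨fun p => S.unary p a, fun f => S.binary f a a⟩

/-- The 2-type of a pair of (distinct) elements. -/
def Struc.tp2 (S : Struc σ A) (a b : A) : TwoType σ :=
  ⟨fun p => S.unary p a, fun p => S.unary p b,
   fun f => S.binary f a a, fun f => S.binary f b b,
   fun f => S.binary f a b, fun f => S.binary f b a⟩

/-- A 2-type is a message-type if it contains f(x,y) for some counting predicate f. -/
def IsMessage (σ : CSig) (τ : TwoType σ) : Prop := ∃ f ∈ σ.counting, τ.rxy f = true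

instance : DecidablePred (IsMessage σ) := fun τ => by unfold IsMessage; infer_instance

/-- A message-type whose inverse is also a message-type. -/
def IsInvertible (σ : CSig) (τ : TwoType σ) : Prop := IsMessage σ τ ∧ IsMessage σ τ.inv

instance : DecidablePred (IsInvertible σ) := fun τ => by unfold IsInvertible; infer_instance

/-- A 2-type is silent if neither it nor its inverse is a message-type. -/
def IsSilent (σ : CSig) (τ : TwoType σ) : Prop := ¬ IsMessage σ τ ∧ ¬ IsMessage σ τ.inv

/-- The (sub)type of message-types over σ. -/
def MsgType (σ : CSig) := {τ : TwoType σ // IsMessage σ τ}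

instance : Fintype (MsgType σ) := Subtype.fintype _
instance : DecidableEq (MsgType σ) := fun a b => by
  unfold MsgType at a b; exact inferInstanceAs (Decidable (a = b))

/-- Y-branching: every element sends at most Y messages along each counting predicate. -/
def Struc.Branching (S : Struc σ A) (Y : ℕ) : Prop :=
  ∀ a : A, ∀ f ∈ σ.counting, {b : A | b ≠ a ∧ S.binary f a b = true}.encard ≤ (Y : ℕ∞)

def Struc.FinitelyBranching (S : Struc σ A) : Prop := ∃ Y : ℕ, S.Branching Y

/-- Chromatic: distinct elements connected by a chain of 1 or 2 invertible
message-types have distinct 1-types. -/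
def Struc.Chromatic (S : Struc σ A) : Prop :=
  (∀ a a' : A, a ≠ a' → IsInvertible σ (S.tp2 a a') → S.tp1 a ≠ S.tp1 a') ∧
  (∀ a a' a'' : A, a ≠ a' → a' ≠ a'' → a ≠ a'' →
     IsInvertible σ (S.tp2 a a') → IsInvertible σ (S.tp2 a' a'') → S.tp1 a ≠ S.tp1 a'')

/-- Z-differentiated: each 1-type is realized either at most once or more than Z times. -/
def Struc.Differentiated (S : Struc σ A) (Z : ℕ) : Prop :=
  ∀ π : OneType σ, {a : A | S.tp1 a = π}.encard ≤ 1 ∨ (Z : ℕ∞) < {a : A | S.tp1 a = π}.encard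

/-- π and π' form a noisy pair: no silent 2-type connects an element of 1-type π
to an element of 1-type π'. -/
def NoisyPair (S : Struc σ A) (π π' : OneType σ) : Prop :=
  ¬ ∃ a a' : A, a ≠ a' ∧ S.tp1 a = π ∧ S.tp1 a' = π' ∧ IsSilent σ (S.tp2 a a')

/-- The Π-profile of a: for each message-type μ, the number of elements b with 1-type
in Π such that tp[a,b] = μ. -/
noncomputable def Struc.pr (S : Struc σ A) (P : Set (OneType σ)) (a : A) : MsgType σ → ℕ∞ :=
  fun μ => {b : A | b ≠ a ∧ S.tp1 b ∈ P ∧ S.tp2 a b = μ.1}.encard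

/-- The Π-count of a: for each counting predicate f, the number of elements b ≠ a with
1-type in Π such that f[a,b] holds. -/
noncomputable def Struc.ct (S : Struc σ A) (P : Set (OneType σ)) (a : A) :
    {f : σ.B // f ∈ σ.counting} → ℕ∞ :=
  fun f => {b : A | b ≠ a ∧ S.tp1 b ∈ P ∧ S.binary f.1 a b = true}.encard

/-- A Π-group: all elements share the same 1-type and the same Π-count. -/
def PiGroup (S : Struc σ A) (P : Set (OneType σ)) (B : Set A) : Prop :=
  ∀ a ∈ B, ∀ b ∈ B, S.tp1 a = S.tp1 b ∧ S.ct P a = S.ct P b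

/-- A π-patch: a {π}-group all of whose elements have {π}-profiles agreeing on the
invertible message-types (the first M* coordinates). -/
def PiPatch (S : Struc σ A) (π : OneType σ) (B : Set A) : Prop :=
  PiGroup S {π} B ∧
  ∀ a ∈ B, ∀ b ∈ B, ∀ μ : MsgType σ, IsInvertible σ μ.1 → S.pr {π} a μ = S.pr {π} b μ

/-- τ is realized in S. -/
def Realizes2 (S : Struc σ A) (τ : TwoType σ) : Prop := ∃ a b : A, a ≠ b ∧ S.tp2 a b = τ

/-- (Π,B)-approximation. -/
def PiBApprox (S S' : Struc σ A) (P : Set (OneType σ)) (B : Set A) : Prop :=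
  S'.Chromatic ∧
  (∀ τ : TwoType σ, Realizes2 S' τ → Realizes2 S τ) ∧
  ∀ a : A,
    S'.tp1 a = S.tp1 a ∧
    S'.pr Pᶜ a = S.pr Pᶜ a ∧
    (a ∉ B → S'.pr Set.univ a = S.pr Set.univ a) ∧
    (a ∈ B → S'.ct P a = S.ct P a)
/-- A star-type: a 1-type together with a vector of multiplicities indexed by the
message-types. -/
structure StarType (σ : CSig) where
  tp : OneType σ
  v : MsgType σ → ℕ
deriving DecidableEq

/-- The defining condition on star-types: v(μ) > 0 implies tp₁(μ) = π. -/
def StarType.IsValid (s : StarType σ) : Prop :=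
  ∀ μ : MsgType σ, 0 < s.v μ → μ.1.tp1 = s.tp

/-- The star-type of an element: its 1-type together with its profile. -/
noncomputable def StarOf (S : Struc σ A) (a : A) : StarType σ where
  tp := S.tp1 a
  v := fun μ => ({b : A | b ≠ a ∧ S.tp2 a b = μ.1}.encard).toNat

/-- X-sparse: at most X distinct star-types are realized. -/
noncomputable def Struc.Sparse (S : Struc σ A) (X : ℕ) : Prop :=
  {st : StarType σ | ∃ a : A, StarOf S a = st}.encard ≤ (X : ℕ∞)

/-- A chromatic star-type: for every 1-type π', the multiplicities of invertible
message-types μ with tp₂(μ) = π' sum to at most 1, and to 0 when π' = tp. -/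
def StarType.Chromatic (s : StarType σ) : Prop :=
  ∀ π' : OneType σ,
    (∑ μ ∈ Finset.univ.filter (fun μ : MsgType σ => IsInvertible σ μ.1 ∧ μ.1.tp2 = π'),
        s.v μ) ≤ 1 ∧
    (π' = s.tp →
      (∑ μ ∈ Finset.univ.filter (fun μ : MsgType σ => IsInvertible σ μ.1 ∧ μ.1.tp2 = π'),
        s.v μ) = 0)

/-- A frame over σ: a finite set of (pairwise distinct) star-types, a set I of
unordered pairs of 1-types, and a choice θ of a silent 2-type for each pair in I. -/
structure Frame (σ : CSig) where
  stars : Finset (StarType σ)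
  valid : ∀ s ∈ stars, s.IsValid
  I : Set (Sym2 (OneType σ))
  θ : Sym2 (OneType σ) → TwoType σ
  hθ : ∀ p ∈ I, IsSilent σ (θ p) ∧ Sym2.mk (θ p).tp1 (θ p).tp2 = p

/-- Y-bounded frame: all star-type multiplicities are at most Y. -/
def Frame.Bounded (F : Frame σ) (Y : ℕ) : Prop :=
  ∀ s ∈ F.stars, ∀ μ : MsgType σ, s.v μ ≤ Y

/-- A chromatic frame: all its star-types are chromatic. -/
def Frame.Chromatic (F : Frame σ) : Prop := ∀ s ∈ F.stars, s.Chromatic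

/-- F describes S: the stars of F are exactly the realized star-types; I consists of the
non-noisy pairs of 1-types; and each θ-value is realized. -/
def Describes (F : Frame σ) (S : Struc σ A) : Prop :=
  (∀ st : StarType σ, st ∈ F.stars ↔ ∃ a : A, StarOf S a = st) ∧
  (∀ π π' : OneType σ, Sym2.mk π π' ∈ F.I ↔ ¬ NoisyPair S π π') ∧
  (∀ p ∈ F.I, ∃ a b : A, a ≠ b ∧ S.tp2 a b = F.θ p)

/-- The number M* of invertible message-types over σ. -/
def MstarCard (σ : CSig) : ℕ :=
  (Finset.univ.filter (fun μ : MsgType σ => IsInvertible σ μ.1)).card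

/-- p_{ik} = 1: the star-type sends no message to any element of 1-type π. -/
def PZero (s : StarType σ) (π : OneType σ) : Prop :=
  ∀ μ : MsgType σ, μ.1.tp2 = π → s.v μ = 0

instance (s : StarType σ) (π : OneType σ) : Decidable (PZero s π) := by
  unfold PZero; infer_instance

/-- r_{ik}: total multiplicity of non-invertible message-types with tp₂ = π. -/
def RCoeff (s : StarType σ) (π : OneType σ) : ℕ :=
  ∑ μ ∈ Finset.univ.filter (fun μ : MsgType σ => ¬ IsInvertible σ μ.1 ∧ μ.1.tp2 = π), s.v μ

/-- s_{ik}: total multiplicity of message-types with tp₂ = π. -/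
def SCoeff (s : StarType σ) (π : OneType σ) : ℕ :=
  ∑ μ ∈ Finset.univ.filter (fun μ : MsgType σ => μ.1.tp2 = π), s.v μ

/-- u_i = Σ_k o_{ik} w_k. -/
def Frame.uVal (F : Frame σ) (w : StarType σ → ℕ) (π : OneType σ) : ℕ :=
  ∑ s ∈ F.stars.filter (fun s => s.tp = π), w s

/-- v_j = Σ_k q_{jk} w_k. -/
def Frame.vVal (F : Frame σ) (w : StarType σ → ℕ) (μ : MsgType σ) : ℕ :=
  ∑ s ∈ F.stars, s.v μ * w s

/-- x_{ii'} = Σ_k o_{ik} p_{i'k} w_k. -/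
def Frame.xVal (F : Frame σ) (w : StarType σ → ℕ) (π π' : OneType σ) : ℕ :=
  ∑ s ∈ F.stars.filter (fun s => s.tp = π ∧ PZero s π'), w s

/-- w is a Z-solution of F (conditions C1–C6, over positive integers). -/
def IsZSolution (F : Frame σ) (Z : ℕ) (w : StarType σ → ℕ) : Prop :=
  (∀ s ∈ F.stars, 0 < w s) ∧
  (∀ μ μ' : MsgType σ, IsInvertible σ μ.1 → μ'.1 = μ.1.inv → F.vVal w μ = F.vVal w μ') ∧
  (∀ π : OneType σ, ∀ s ∈ F.stars, SCoeff s π ≤ F.uVal w π) ∧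
  (∀ π : OneType σ, F.uVal w π ≤ 1 ∨ Z < F.uVal w π) ∧
  (∀ π π' : OneType σ, ∀ s ∈ F.stars, s.tp = π →
     (1 < F.uVal w π ∨ RCoeff s π' ≤ F.xVal w π' π)) ∧
  (∀ π π' : OneType σ, Sym2.mk π π' ∉ F.I → F.uVal w π ≤ 1 ∨ F.uVal w π' ≤ 1) ∧
  (∀ π π' : OneType σ, ∀ s ∈ F.stars, Sym2.mk π π' ∉ F.I → s.tp = π →
     (1 < F.uVal w π ∨ F.xVal w π' π ≤ RCoeff s π'))

/-- u_i over ℕ* = ℕ ∪ {ℵ₀}. -/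
def Frame.uValE (F : Frame σ) (w : StarType σ → ℕ∞) (π : OneType σ) : ℕ∞ :=
  ∑ s ∈ F.stars.filter (fun s => s.tp = π), w s

/-- v_j over ℕ*. -/
def Frame.vValE (F : Frame σ) (w : StarType σ → ℕ∞) (μ : MsgType σ) : ℕ∞ :=
  ∑ s ∈ F.stars, (s.v μ : ℕ∞) * w s

/-- x_{ii'} over ℕ*. -/
def Frame.xValE (F : Frame σ) (w : StarType σ → ℕ∞) (π π' : OneType σ) : ℕ∞ :=
  ∑ s ∈ F.stars.filter (fun s => s.tp = π ∧ PZero s π'), w s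

/-- w is an extended Z-solution of F: a Z-solution over ℕ* = ℕ ∪ {ℵ₀}
(with nonzero components). -/
def IsExtZSolution (F : Frame σ) (Z : ℕ) (w : StarType σ → ℕ∞) : Prop :=
  (∀ s ∈ F.stars, w s ≠ 0) ∧
  (∀ μ μ' : MsgType σ, IsInvertible σ μ.1 → μ'.1 = μ.1.inv → F.vValE w μ = F.vValE w μ') ∧
  (∀ π : OneType σ, ∀ s ∈ F.stars, (SCoeff s π : ℕ∞) ≤ F.uValE w π) ∧
  (∀ π : OneType σ, F.uValE w π ≤ 1 ∨ (Z : ℕ∞) < F.uValE w π) ∧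
  (∀ π π' : OneType σ, ∀ s ∈ F.stars, s.tp = π →
     (1 < F.uValE w π ∨ (RCoeff s π' : ℕ∞) ≤ F.xValE w π' π)) ∧
  (∀ π π' : OneType σ, Sym2.mk π π' ∉ F.I → F.uValE w π ≤ 1 ∨ F.uValE w π' ≤ 1) ∧
  (∀ π π' : OneType σ, ∀ s ∈ F.stars, Sym2.mk π π' ∉ F.I → s.tp = π →
     (1 < F.uValE w π ∨ F.xValE w π' π ≤ (RCoeff s π' : ℕ∞)))

/-- The data of a normal-form sentence φ*: a quantifier-free equality-free α(x)
(given semantically by the set of 1-types entailing it), a quantifier-free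
equality-free β(x,y) (given by the set of 2-types entailing it), and positive
counts C_h for the counting predicates. -/
structure NormalForm (σ : CSig) where
  alpha : OneType σ → Prop
  beta : TwoType σ → Prop
  C : σ.B → ℕ
  hC : ∀ f ∈ σ.counting, 0 < C f

/-- S ⊨ φ*. -/
def SatNF (N : NormalForm σ) (S : Struc σ A) : Prop :=
  (∀ a : A, N.alpha (S.tp1 a)) ∧
  (∀ a b : A, a ≠ b → N.beta (S.tp2 a b)) ∧
  (∀ f ∈ σ.counting, ∀ a : A,
     {b : A | b ≠ a ∧ S.binary f a b = true}.encard = (N.C f : ℕ∞))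

/-- F ⊨ φ*. -/
def FrameSatNF (N : NormalForm σ) (F : Frame σ) : Prop :=
  (∀ s ∈ F.stars, N.alpha s.tp) ∧
  (∀ s ∈ F.stars, ∀ μ : MsgType σ, 0 < s.v μ → N.beta μ.1 ∧ N.beta μ.1.inv) ∧
  (∀ p ∈ F.I, N.beta (F.θ p) ∧ N.beta ((F.θ p).inv)) ∧
  (∀ s ∈ F.stars, ∀ f ∈ σ.counting,
     (∑ μ ∈ Finset.univ.filter (fun μ : MsgType σ => μ.1.rxy f = true), s.v μ) = N.C f)

/-- The signature obtained from σ by adding k new unary predicates; the counting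
predicates are unchanged. -/
def addUnary (σ : CSig) (k : ℕ) : CSig where
  U := σ.U ⊕ Fin k
  B := σ.B
  counting := σ.counting

/-- S' (interpreting σ with k extra unary predicates) is an expansion of S:
it agrees with S on all predicates of σ. -/
def IsExpansion {σ : CSig} {k : ℕ} {A : Type} (S' : Struc (addUnary σ k) A)
    (S : Struc σ A) : Prop :=
  (∀ (p : σ.U) (a : A), S'.unary (Sum.inl p) a = S.unary p a) ∧
  (∀ (f : σ.B) (a b : A), S'.binary f a b = S.binary f a b)

/-!
Elements joined by an invertible message-type form a graph in which every vertex has at most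
`m * Y` neighbours, since each such message uses one of the `m` counting predicates, each with at
most `Y` witnesses. Its square, joining elements at distance one or two, therefore has degree at
most `(m * Y) ^ 2`, and on a countable domain a greedy colouring along an enumeration needs at most
`(m * Y) ^ 2 + 1` colours. These fit injectively into the `2 ^ ⌈log₂((m * Y) ^ 2 + 1)⌉` truth
assignments to the new unary predicates, so elements at distance one or two get different 1-types,
which is chromaticity.
-/

namespace SimpleGraph

variable {V : Type*} (G : SimpleGraph V)

def square : SimpleGraph V where
  Adj u w := u ≠ w ∧ (G.Adj u w ∨ ∃ v, G.Adj u v ∧ G.Adj v w)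
  symm := ⟨fun _ _ ⟨hne, h⟩ =>
    ⟨hne.symm, h.imp Adj.symm fun ⟨v, huv, hvw⟩ => ⟨v, hvw.symm, huv.symm⟩⟩⟩
  loopless := ⟨fun _ h => h.1 rfl⟩

theorem encard_neighborSet_square_le {D : ℕ} (h : ∀ v, (G.neighborSet v).encard ≤ D) (v : V) :
    (G.square.neighborSet v).encard ≤ D ^ 2 := by
  have hfin : (G.neighborSet v).Finite := Set.finite_of_encard_le_coe (h v)
  have hsub : G.square.neighborSet v ⊆
      ⋃ w ∈ hfin.toFinset, insert w (G.neighborSet w \ {v}) := by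
    rintro u ⟨hne, hu | ⟨w, hvw, hwu⟩⟩
    · exact Set.mem_biUnion (hfin.mem_toFinset.2 hu) (Set.mem_insert u _)
    · exact Set.mem_biUnion (hfin.mem_toFinset.2 hvw)
        (Set.mem_insert_of_mem w ⟨hwu, hne.symm⟩)
  -- a neighbour `w` of `v` accounts for itself and at most `D - 1` neighbours other than `v`
  have hw : ∀ w ∈ hfin.toFinset, (insert w (G.neighborSet w \ {v})).encard ≤ D := by
    intro w hw
    calc (insert w (G.neighborSet w \ {v})).encard
        ≤ (G.neighborSet w \ {v}).encard + 1 := Set.encard_insert_le _ _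
      _ = (G.neighborSet w).encard :=
          Set.encard_sdiff_singleton_add_one (hfin.mem_toFinset.1 hw).symm
      _ ≤ D := h w
  calc (G.square.neighborSet v).encard
      ≤ ∑ w ∈ hfin.toFinset, (insert w (G.neighborSet w \ {v})).encard :=
        (Set.encard_le_encard hsub).trans (Finset.set_encard_biUnion_le _ _)
    _ ≤ hfin.toFinset.card • (D : ℕ∞) := Finset.sum_le_card_nsmul _ _ _ hw
    _ ≤ D ^ 2 := by
        rw [nsmul_eq_mul, ← hfin.encard_eq_coe_toFinset_card, sq]
        exact mul_le_mul_left (h v) _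

noncomputable def greedyColoring (e : V → ℕ) (D : ℕ) (v : V) : Fin (D + 1) :=
  Classical.epsilon fun i => ∀ w, G.Adj v w → e w < e v → greedyColoring e D w ≠ i
termination_by e v

theorem greedyColoring_ne {D : ℕ} (h : ∀ v, (G.neighborSet v).encard ≤ D) (e : V → ℕ)
    {v w : V} (hvw : G.Adj v w) (hlt : e w < e v) :
    G.greedyColoring e D w ≠ G.greedyColoring e D v := by
  have hfree : ∃ i, i ∉ G.greedyColoring e D '' G.neighborSet v := by
    by_contra! hall
    have hcard := (Set.eq_univ_of_forall hall ▸ Set.encard_image_le _ _).trans (h v)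
    rw [Set.encard_univ, ENat.card_eq_coe_fintype_card, Fintype.card_fin] at hcard
    exact absurd (ENat.natCast_le_natCast.1 hcard) (by omega)
  rw [greedyColoring.eq_1 G e D v]
  refine Classical.epsilon_spec
    (p := fun i => ∀ w, G.Adj v w → e w < e v → G.greedyColoring e D w ≠ i) ?_ w hvw hlt
  exact hfree.imp fun i hi w hw _ hwi => hi ⟨w, hw, hwi⟩

theorem colorable_of_encard_neighborSet_le [Countable V] {D : ℕ}
    (h : ∀ v, (G.neighborSet v).encard ≤ D) : G.Colorable (D + 1) := by
  obtain ⟨e, he⟩ := Countable.exists_injective_nat V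
  refine ⟨Coloring.mk (G.greedyColoring e D) fun {v w} hvw => ?_⟩
  rcases (he.ne hvw.ne).lt_or_gt with hlt | hlt
  · exact G.greedyColoring_ne h e hvw.symm hlt
  · exact (G.greedyColoring_ne h e hvw hlt).symm

end SimpleGraph

namespace Struc

def invertibleGraph (S : Struc σ A) : SimpleGraph A where
  Adj a b := a ≠ b ∧ IsInvertible σ (S.tp2 a b)
  symm := ⟨fun _ _ ⟨hne, h₁, h₂⟩ => ⟨hne.symm, h₂, h₁⟩⟩
  loopless := ⟨fun _ h => h.1 rfl⟩

theorem encard_neighborSet_invertibleGraph_le {S : Struc σ A} {Y : ℕ} (hbr : S.Branching Y)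
    (a : A) : (S.invertibleGraph.neighborSet a).encard ≤ (σ.counting.card * Y : ℕ) := by
  calc (S.invertibleGraph.neighborSet a).encard
      ≤ (⋃ f ∈ σ.counting, {b | b ≠ a ∧ S.binary f a b = true}).encard := by
        refine Set.encard_le_encard ?_
        rintro b ⟨hne, ⟨f, hf, hfab⟩, -⟩
        exact Set.mem_biUnion hf ⟨hne.symm, hfab⟩
    _ ≤ ∑ f ∈ σ.counting, {b | b ≠ a ∧ S.binary f a b = true}.encard :=
        Finset.set_encard_biUnion_le _ _
    _ ≤ σ.counting.card • (Y : ℕ∞) := Finset.sum_le_card_nsmul _ _ _ (hbr a)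
    _ = (σ.counting.card * Y : ℕ) := by rw [nsmul_eq_mul, Nat.cast_mul]

def expandByColoring (S : Struc σ A) {k : ℕ} (c : A → Fin k → Bool) :
    Struc (addUnary σ k) A where
  unary := Sum.elim S.unary fun j a => c a j
  binary := S.binary

variable (S : Struc σ A) {k : ℕ} (c : A → Fin k → Bool)

theorem isExpansion_expandByColoring : IsExpansion (S.expandByColoring c) S :=
  ⟨fun _ _ => rfl, fun _ _ _ => rfl⟩

theorem tp1_expandByColoring_ne {a b : A} (h : c a ≠ c b) :
    (S.expandByColoring c).tp1 a ≠ (S.expandByColoring c).tp1 b :=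
  fun heq => h (funext fun j => congrArg (fun t => t.u (Sum.inr j)) heq)

theorem chromatic_expandByColoring
    (hc : ∀ ⦃a b⦄, S.invertibleGraph.square.Adj a b → c a ≠ c b) :
    (S.expandByColoring c).Chromatic :=
  -- the expansion keeps all binary and counting predicates, so invertibility is read off `S`
  ⟨fun _ _ hne hinv => S.tp1_expandByColoring_ne c (hc ⟨hne, .inl ⟨hne, hinv⟩⟩),
   fun _ a' _ h₁ h₂ h₃ hinv₁ hinv₂ =>
    S.tp1_expandByColoring_ne c (hc ⟨h₃, .inr ⟨a', ⟨h₁, hinv₁⟩, ⟨h₂, hinv₂⟩⟩⟩)⟩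

end Struc

/-- Lemma 3 (chromatic expansion): a Y-branching structure over a counting signature
with m counting predicates can be expanded to a chromatic structure over the signature
with ⌈log₂((mY)²+1)⌉ extra unary predicates. -/
theorem chromatic_expansion (σ : CSig) (m Y : ℕ) (hm : σ.counting.card = m)
    (A : Type) [Countable A] (S : Struc σ A) (hbr : S.Branching Y) :
    ∃ S' : Struc (addUnary σ (Nat.clog 2 ((m * Y) ^ 2 + 1))) A,
      IsExpansion S' S ∧ S'.Chromatic := by
  have hdeg : ∀ a, (S.invertibleGraph.square.neighborSet a).encard ≤ ((m * Y) ^ 2 : ℕ) :=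
    S.invertibleGraph.encard_neighborSet_square_le
      (hm ▸ S.encard_neighborSet_invertibleGraph_le hbr)
  obtain ⟨col⟩ := S.invertibleGraph.square.colorable_of_encard_neighborSet_le hdeg
  obtain ⟨code⟩ :
      Nonempty (Fin ((m * Y) ^ 2 + 1) ↪ (Fin (Nat.clog 2 ((m * Y) ^ 2 + 1)) → Bool)) :=
    Function.Embedding.nonempty_of_card_le (by
      simp only [Fintype.card_fin, Fintype.card_fun, Fintype.card_bool]
      exact Nat.le_pow_clog one_lt_two _)
  exact ⟨S.expandByColoring (code ∘ col), S.isExpansion_expandByColoring _,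
    S.chromatic_expandByColoring _ fun _ _ h => code.injective.ne (col.valid h)⟩
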